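/- Let u ⊆ {1,…,s} be nonempty and k ∈ {0,1,…,m−1}^{|u|}. Then Γ_{u,k} = 2^{m − rank(C_{u,k})} if and only if the vector Σ_{j∈u} C_j(k_j+1,:) ∈ F₂^m (the sum over F₂ of the (k_j+1)-st rows of the C_j for j ∈ u) lies in the row space of C_{u,k} over F₂. -/

import Mathlib

open Finset

noncomputable section

/-- The bit vector `i⃗ ∈ F₂^m` of the integer `i = Σ_{ℓ=1}^m i_ℓ 2^{ℓ-1}`. -/
def bvec (m : ℕ) (i : ℕ) : Fin m → ZMod 2 :=
  fun ℓ => if Nat.testBit i ℓ.1 then 1 else 0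

/-- The `(r+1)`-st row (i.e. `r` with 0-indexing) of an `m × m` matrix over `F₂`,
as a vector in `F₂^m`; junk value `0` if `r ≥ m` (never used under the hypotheses below). -/
def rowAt (m : ℕ) (A : Matrix (Fin m) (Fin m) (ZMod 2)) (r : ℕ) : Fin m → ZMod 2 :=
  fun ℓ => if h : r < m then A ⟨r, h⟩ ℓ else 0

/-- The stacked matrix `C_{u,k}`: for each `j ∈ u`, the first `k j` rows of `C j`. -/
def stack {m s : ℕ} (C : Fin s → Matrix (Fin m) (Fin m) (ZMod 2))
    (u : Finset (Fin s)) (k : Fin s → ℕ) :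
    Matrix ((j : {x // x ∈ u}) × Fin (k j.1)) (Fin m) (ZMod 2) :=
  fun p => rowAt m (C p.1.1) p.2.1

/-- `∇C_{u,k}`: the matrix whose rows are the `(k j + 1)`-st rows (1-indexed) of `C j`, `j ∈ u`. -/
def grad {m s : ℕ} (C : Fin s → Matrix (Fin m) (Fin m) (ZMod 2))
    (u : Finset (Fin s)) (k : Fin s → ℕ) :
    Matrix {x // x ∈ u} (Fin m) (ZMod 2) :=
  fun j => rowAt m (C j.1) (k j.1)

/-- The coordinate `x_{ij} ∈ [0,1)` of the digital net generated by `C₁,…,C_s`: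
`x_{ij} = Σ_{ℓ=1}^m y_ℓ 2^{-ℓ}` where `y = C_j · i⃗` over `F₂`. -/
def pt {m s : ℕ} (C : Fin s → Matrix (Fin m) (Fin m) (ZMod 2)) (i : ℕ) (j : Fin s) : ℝ :=
  ∑ ℓ : Fin m, (((C j).mulVec (bvec m i) ℓ).val : ℝ) / 2 ^ (ℓ.1 + 1)

/-- The factor `N`: with `M(x,x') = max{k ∈ ℕ₀ : ⌊2^k x⌋ = ⌊2^k x'⌋}` (the number of matching
leading binary digits), `Nf x x' c` equals `1` if `M(x,x') > c` (equivalently the first `c+1`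
binary digits match), `-1` if `M(x,x') = c` (the first `c` digits match but not `c+1`), and
`0` if `M(x,x') < c`. -/
def Nf (x x' : ℝ) (c : ℕ) : ℤ :=
  if ⌊(2:ℝ) ^ (c + 1) * x⌋ = ⌊(2:ℝ) ^ (c + 1) * x'⌋ then 1
  else if ⌊(2:ℝ) ^ c * x⌋ = ⌊(2:ℝ) ^ c * x'⌋ then -1
  else 0

/-- The gain coefficient `Γ_{u,k} = 2^{-m} Σ_{i=0}^{2^m-1} Σ_{i'=0}^{2^m-1} ∏_{j∈u} N_{i,i',j}`. -/
def Gam {m s : ℕ} (C : Fin s → Matrix (Fin m) (Fin m) (ZMod 2))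
    (u : Finset (Fin s)) (k : Fin s → ℕ) : ℚ :=
  (2 ^ m : ℚ)⁻¹ * ∑ i ∈ Finset.range (2 ^ m), ∑ i' ∈ Finset.range (2 ^ m),
      ∏ j ∈ u, (Nf (pt C i j) (pt C i' j) (k j) : ℚ)

/-!
Identify `i` with its bit vector `i⃗`, so that `x_{ij}` is the binary fraction with digits
`y = C_j i⃗`. Two such fractions agree in their first `c` binary digits iff the first `c`
entries of `C_j (i⃗ + i⃗')` vanish, so `∏_{j ∈ u} N_{i,i',j}` depends only on `d = i⃗ + i⃗'`:
it is the indicator of `C_{u,k} d = 0` times `(-1)^{g·d}`, where `g = Σ_{j ∈ u} C_j(k_j+1,:)`.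
Summing over `i, i'` gives `Γ_{u,k} = Σ_{d ∈ ker C_{u,k}} (-1)^{g·d}`, a character sum over the
group `ker C_{u,k}`. It equals `|ker C_{u,k}| = 2^{m - rank C_{u,k}}` if `g` is orthogonal to
the kernel, i.e. lies in the row space of `C_{u,k}`, and `0` otherwise.
-/

open Matrix

lemma ZMod.eq_zero_or_eq_one (a : ZMod 2) : a = 0 ∨ a = 1 := by
  revert a; decide

section BinaryExpansion

variable {m : ℕ}

def binNat (w : Fin m → ZMod 2) : ℕ :=
  finFunctionFinEquiv (fun ℓ => (⟨(w ℓ).val, ZMod.val_lt _⟩ : Fin 2))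

lemma binNat_lt (w : Fin m → ZMod 2) : binNat w < 2 ^ m := Fin.isLt _

lemma binNat_eq_sum (w : Fin m → ZMod 2) : binNat w = ∑ ℓ : Fin m, (w ℓ).val * 2 ^ (ℓ : ℕ) :=
  finFunctionFinEquiv_apply _

lemma testBit_binNat (w : Fin m → ZMod 2) (p : Fin m) :
    (binNat w).testBit p = decide (w p = 1) := by
  rw [binNat, Nat.testBit_eq_decide_div_mod_eq, ← finFunctionFinEquiv_symm_apply_val,
    Equiv.symm_apply_apply, decide_eq_decide]
  exact ZMod.val_eq_one one_lt_two _

lemma binNat_div_two_pow_eq_iff (w w' : Fin m → ZMod 2) (t : ℕ) :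
    binNat w / 2 ^ t = binNat w' / 2 ^ t ↔ ∀ p : Fin m, t ≤ p → w p = w' p := by
  constructor
  · intro h p hp
    have := congrArg (Nat.testBit · (p - t)) h
    simp only [Nat.testBit_div_two_pow, Nat.sub_add_cancel hp, testBit_binNat,
      decide_eq_decide] at this
    rcases ZMod.eq_zero_or_eq_one (w p) with hw | hw <;>
      rcases ZMod.eq_zero_or_eq_one (w' p) with hw' | hw' <;> simp_all
  · intro h
    refine Nat.eq_of_testBit_eq fun i => ?_
    rw [Nat.testBit_div_two_pow, Nat.testBit_div_two_pow]
    by_cases hi : i + t < m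
    · rw [testBit_binNat _ ⟨i + t, hi⟩, testBit_binNat _ ⟨i + t, hi⟩,
        h ⟨i + t, hi⟩ (Nat.le_add_left t i)]
    · have hpow : 2 ^ m ≤ 2 ^ (i + t) := Nat.pow_le_pow_right two_pos (not_lt.mp hi)
      rw [Nat.testBit_lt_two_pow ((binNat_lt w).trans_le hpow),
        Nat.testBit_lt_two_pow ((binNat_lt w').trans_le hpow)]

lemma bvec_binNat (w : Fin m → ZMod 2) : bvec m (binNat w) = w := by
  funext ℓ
  rw [bvec, testBit_binNat]
  rcases ZMod.eq_zero_or_eq_one (w ℓ) with h | h <;> simp [h]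

lemma binNat_bvec {i : ℕ} (hi : i < 2 ^ m) : binNat (bvec m i) = i := by
  refine Nat.eq_of_testBit_eq fun p => ?_
  by_cases hp : p < m
  · rw [testBit_binNat _ ⟨p, hp⟩, bvec]
    cases i.testBit p <;> simp
  · have hpow : 2 ^ m ≤ 2 ^ p := Nat.pow_le_pow_right two_pos (not_lt.mp hp)
    rw [Nat.testBit_lt_two_pow ((binNat_lt _).trans_le hpow),
      Nat.testBit_lt_two_pow (hi.trans_le hpow)]

lemma sum_range_bvec {M : Type*} [AddCommMonoid M] (f : (Fin m → ZMod 2) → M) :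
    ∑ i ∈ range (2 ^ m), f (bvec m i) = ∑ w, f w :=
  Finset.sum_nbij' (bvec m) binNat (fun _ _ => mem_univ _)
    (fun w _ => mem_range.mpr (binNat_lt w)) (fun _ hi => binNat_bvec (mem_range.mp hi))
    (fun w _ => bvec_binNat w) (fun _ _ => rfl)

end BinaryExpansion

section BinaryFraction

variable {m : ℕ}

def binFrac (y : Fin m → ZMod 2) : ℝ := ∑ ℓ : Fin m, ((y ℓ).val : ℝ) / 2 ^ (ℓ.1 + 1)

lemma binFrac_eq_div (y : Fin m → ZMod 2) :
    binFrac y = binNat (y ∘ Fin.rev) / (2 : ℝ) ^ m := by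
  rw [binNat_eq_sum, ← Equiv.sum_comp Fin.revPerm, binFrac]
  push_cast
  rw [Finset.sum_div]
  refine Finset.sum_congr rfl fun ℓ _ => ?_
  have hm : (2 : ℝ) ^ m = 2 ^ (ℓ.1 + 1) * 2 ^ (m - (ℓ.1 + 1)) := by
    rw [← pow_add]; congr 1; omega
  rw [Fin.revPerm_apply, Function.comp_apply, Fin.rev_rev, Fin.val_rev, hm,
    mul_div_mul_right _ _ (by positivity)]

lemma floor_two_pow_mul_binFrac (y : Fin m → ZMod 2) {c : ℕ} (hc : c ≤ m) :
    ⌊(2 : ℝ) ^ c * binFrac y⌋ = (binNat (y ∘ Fin.rev) / 2 ^ (m - c) : ℕ) := by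
  have hm : (2 : ℝ) ^ m = 2 ^ c * ((2 ^ (m - c) : ℕ) : ℝ) := by
    rw [Nat.cast_pow, Nat.cast_ofNat, ← pow_add, Nat.add_sub_cancel' hc]
  rw [binFrac_eq_div, hm, ← mul_div_assoc, mul_div_mul_left _ _ (by positivity),
    Int.floor_div_natCast, Int.floor_natCast, Int.natCast_div]

lemma floor_two_pow_mul_binFrac_eq_iff (y y' : Fin m → ZMod 2) {c : ℕ} (hc : c ≤ m) :
    ⌊(2 : ℝ) ^ c * binFrac y⌋ = ⌊(2 : ℝ) ^ c * binFrac y'⌋ ↔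
      ∀ ℓ : Fin m, ℓ.1 < c → y ℓ = y' ℓ := by
  rw [floor_two_pow_mul_binFrac y hc, floor_two_pow_mul_binFrac y' hc, Int.natCast_inj,
    binNat_div_two_pow_eq_iff, ← Fin.revPerm.forall_congr_right]
  refine forall_congr' fun ℓ => ?_
  simp only [Fin.revPerm_apply, Function.comp_apply, Fin.rev_rev, Fin.val_rev]
  exact imp_congr_left (by omega)

end BinaryFraction


def signChar : AddChar (ZMod 2) ℚ := AddChar.zmodChar 2 (ζ := -1) (by norm_num)

lemma signChar_of_ne_zero {a : ZMod 2} (ha : a ≠ 0) : signChar a = -1 := by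
  rw [(ZMod.eq_zero_or_eq_one a).resolve_left ha]
  rfl

lemma signChar_eq_one_iff {a : ZMod 2} : signChar a = 1 ↔ a = 0 := by
  refine ⟨fun h => by_contra fun ha => ?_, fun ha => ha ▸ AddChar.map_zero_eq_one _⟩
  rw [signChar_of_ne_zero ha] at h
  norm_num at h

lemma signChar_sum {ι : Type*} (t : Finset ι) (f : ι → ZMod 2) :
    signChar (∑ i ∈ t, f i) = ∏ i ∈ t, signChar (f i) := by
  classical
  induction t using Finset.induction_on with
  | empty => exact AddChar.map_zero_eq_one _
  | insert a t ha ih => rw [sum_insert ha, prod_insert ha, AddChar.map_add_eq_mul, ih]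

lemma forall_val_lt_succ_iff {m : ℕ} (c : Fin m) (P : Fin m → Prop) :
    (∀ ℓ : Fin m, ℓ.1 < c.1 + 1 → P ℓ) ↔ (∀ ℓ : Fin m, ℓ < c → P ℓ) ∧ P c := by
  refine ⟨fun h => ⟨fun ℓ hℓ => h ℓ (by omega), h c (by omega)⟩, fun ⟨h, hc⟩ ℓ hℓ => ?_⟩
  rcases Nat.lt_succ_iff_lt_or_eq.mp hℓ with hlt | heq
  · exact h ℓ hlt
  · exact Fin.ext heq ▸ hc

lemma Nf_binFrac {m : ℕ} (y y' : Fin m → ZMod 2) (c : Fin m) :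
    (Nf (binFrac y) (binFrac y') c : ℚ) =
      (if ∀ ℓ : Fin m, ℓ < c → (y + y') ℓ = 0 then 1 else 0) * signChar ((y + y') c) := by
  simp only [Nf, floor_two_pow_mul_binFrac_eq_iff y y' c.2,
    floor_two_pow_mul_binFrac_eq_iff y y' c.2.le, forall_val_lt_succ_iff, Pi.add_apply,
    CharTwo.add_eq_zero]
  by_cases hc : y c = y' c
  · rw [CharTwo.add_eq_zero.mpr hc, AddChar.map_zero_eq_one]
    split_ifs <;> simp_all
  · rw [signChar_of_ne_zero (mt CharTwo.add_eq_zero.mp hc)]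
    split_ifs <;> simp_all

lemma Matrix.mem_span_range_row_iff {ι n K : Type*} [Fintype ι] [Fintype n] [DecidableEq n]
    [Field K] (A : Matrix ι n K) (g : n → K) :
    g ∈ Submodule.span K (Set.range A.row) ↔ ∀ d, A *ᵥ d = 0 → g ⬝ᵥ d = 0 := by
  constructor
  · intro hg d hd
    obtain ⟨c, rfl⟩ : g ∈ LinearMap.range A.vecMulLinear := by rwa [range_vecMulLinear]
    rw [vecMulLinear_apply, ← dotProduct_mulVec, hd, dotProduct_zero]
  · intro h
    have hker : ⨅ i, LinearMap.ker (dotProductEquiv K n (A i)) ≤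
        LinearMap.ker (dotProductEquiv K n g) := fun d hd => by
      simp only [Submodule.mem_iInf, LinearMap.mem_ker, dotProductEquiv_apply_apply] at hd ⊢
      exact h d (funext hd)
    have := mem_span_of_iInf_ker_le_ker hker
    rw [Set.range_comp' (dotProductEquiv K n) A] at this
    exact (Submodule.apply_mem_span_image_iff_mem_span (dotProductEquiv K n).injective).mp this

lemma Matrix.natCard_ker_mulVecLin {ι n K : Type*} [Fintype n] [Field K] [Finite K]
    (A : Matrix ι n K) :
    Nat.card (LinearMap.ker A.mulVecLin) = Nat.card K ^ (Fintype.card n - A.rank) := by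
  rw [Module.natCard_eq_pow_finrank (K := K)]
  congr 1
  have := LinearMap.finrank_range_add_finrank_ker A.mulVecLin
  rw [Module.finrank_fintype_fun_eq_card] at this
  rw [Matrix.rank]
  omega

open Classical in
lemma sum_ker_signChar_dotProduct {ι n : Type*} [Fintype ι] [Fintype n] [DecidableEq n]
    (A : Matrix ι n (ZMod 2)) (g : n → ZMod 2) :
    ∑ d, (if A *ᵥ d = 0 then 1 else 0) * signChar (g ⬝ᵥ d) =
      if g ∈ Submodule.span (ZMod 2) (Set.range A.row) then
        (2 : ℚ) ^ (Fintype.card n - A.rank) else 0 := by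
  let ψ : AddChar (LinearMap.ker A.mulVecLin) ℚ := signChar.compAddMonoidHom
    ((dotProductEquiv (ZMod 2) n g : (n → ZMod 2) →+ ZMod 2).comp
      (LinearMap.ker A.mulVecLin).subtype.toAddMonoidHom)
  have hψ : ψ = 0 ↔ g ∈ Submodule.span (ZMod 2) (Set.range A.row) := by
    simp only [AddChar.eq_zero_iff, Subtype.forall, LinearMap.mem_ker, mulVecLin_apply,
      A.mem_span_range_row_iff, ← signChar_eq_one_iff]
    rfl
  calc ∑ d, (if A *ᵥ d = 0 then 1 else 0) * signChar (g ⬝ᵥ d)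
      = ∑ d : LinearMap.ker A.mulVecLin, ψ d := by
        simp only [boole_mul]
        rw [← Finset.sum_filter]
        exact Finset.sum_subtype _ (by simp) _
    _ = _ := by
        rw [AddChar.sum_eq_ite, Fintype.card_eq_nat_card, A.natCard_ker_mulVecLin, Nat.card_zmod]
        push_cast
        exact if_congr hψ rfl rfl

section DigitalNet

variable {m s : ℕ} (C : Fin s → Matrix (Fin m) (Fin m) (ZMod 2))

lemma rowAt_dotProduct (A : Matrix (Fin m) (Fin m) (ZMod 2)) {r : ℕ} (hr : r < m)
    (d : Fin m → ZMod 2) : rowAt m A r ⬝ᵥ d = (A *ᵥ d) ⟨r, hr⟩ := by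
  rw [mulVec]
  congr 1
  funext ℓ
  exact dif_pos hr

lemma Nf_pt (i i' : ℕ) (j : Fin s) {c : ℕ} (hc : c < m) :
    (Nf (pt C i j) (pt C i' j) c : ℚ) =
      (if ∀ ℓ : Fin m, ℓ.1 < c → (C j *ᵥ (bvec m i + bvec m i')) ℓ = 0 then 1 else 0) *
        signChar (rowAt m (C j) c ⬝ᵥ (bvec m i + bvec m i')) := by
  rw [rowAt_dotProduct _ hc, mulVec_add]
  exact Nf_binFrac _ _ ⟨c, hc⟩

variable (u : Finset (Fin s)) {k : Fin s → ℕ}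

lemma stack_mulVec_eq_zero_iff (hk : ∀ j ∈ u, k j < m) (d : Fin m → ZMod 2) :
    stack C u k *ᵥ d = 0 ↔ ∀ j ∈ u, ∀ ℓ : Fin m, ℓ.1 < k j → (C j *ᵥ d) ℓ = 0 := by
  constructor
  · intro h j hj ℓ hℓ
    rw [← rowAt_dotProduct _ ℓ.2]
    exact congr_fun h ⟨⟨j, hj⟩, ⟨ℓ, hℓ⟩⟩
  · intro h
    funext ⟨⟨j, hj⟩, t⟩
    exact (rowAt_dotProduct _ (t.2.trans (hk j hj)) d).trans (h j hj _ t.2)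

lemma prod_Nf_pt (hk : ∀ j ∈ u, k j < m) (i i' : ℕ) :
    ∏ j ∈ u, (Nf (pt C i j) (pt C i' j) (k j) : ℚ) =
      (if stack C u k *ᵥ (bvec m i + bvec m i') = 0 then 1 else 0) *
        signChar ((∑ j ∈ u, rowAt m (C j) (k j)) ⬝ᵥ (bvec m i + bvec m i')) := by
  rw [prod_congr rfl fun j hj => Nf_pt C i i' j (hk j hj), prod_mul_distrib, sum_dotProduct,
    signChar_sum]
  simp only [prod_boole, stack_mulVec_eq_zero_iff C u hk]
  -- the two conditions now agree, but carry different `Decidable` instances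
  split_ifs <;> rfl

lemma Gam_eq_sum (hk : ∀ j ∈ u, k j < m) :
    Gam C u k = ∑ d, (if stack C u k *ᵥ d = 0 then 1 else 0) *
      signChar ((∑ j ∈ u, rowAt m (C j) (k j)) ⬝ᵥ d) := by
  let F : (Fin m → ZMod 2) → ℚ := fun d => (if stack C u k *ᵥ d = 0 then 1 else 0) *
      signChar ((∑ j ∈ u, rowAt m (C j) (k j)) ⬝ᵥ d)
  have hF (i : ℕ) : ∑ i' ∈ range (2 ^ m), F (bvec m i + bvec m i') = ∑ d, F d := by
    rw [sum_range_bvec (fun w => F (bvec m i + w))]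
    exact Equiv.sum_comp (Equiv.addLeft (bvec m i)) F
  calc Gam C u k
      = (2 ^ m : ℚ)⁻¹ * ∑ i ∈ range (2 ^ m), ∑ i' ∈ range (2 ^ m), F (bvec m i + bvec m i') := by
        simp only [Gam, prod_Nf_pt C u hk, F]
    _ = ∑ d, F d := by
        rw [sum_congr rfl fun i _ => hF i, sum_const, card_range, nsmul_eq_mul, Nat.cast_pow,
          Nat.cast_two, inv_mul_cancel_left₀ (by positivity)]

end DigitalNet

theorem statement_general (m s : ℕ) (hm : 1 ≤ m)
    (C : Fin s → Matrix (Fin m) (Fin m) (ZMod 2))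
    (u : Finset (Fin s))
    (k : Fin s → ℕ) (hk : ∀ j ∈ u, k j ≤ m - 1) :
    Gam C u k = (2 : ℚ) ^ (m - (stack C u k).rank) ↔
      (∑ j ∈ u, rowAt m (C j) (k j)) ∈
        Submodule.span (ZMod 2) (Set.range (fun p => stack C u k p)) := by
  have hk_lt : ∀ j ∈ u, k j < m := fun j hj => by have := hk j hj; omega
  rw [Gam_eq_sum C u hk_lt, sum_ker_signChar_dotProduct, Fintype.card_fin]
  split_ifs with hg
  · exact iff_of_true rfl hg
  · exact iff_of_false (ne_of_lt (by positivity)) hg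

theorem statement (m s : ℕ) (hm : 1 ≤ m) (hs : 1 ≤ s)
    (C : Fin s → Matrix (Fin m) (Fin m) (ZMod 2))
    (u : Finset (Fin s)) (hu : u.Nonempty)
    (k : Fin s → ℕ) (hk : ∀ j ∈ u, k j ≤ m - 1) :
    Gam C u k = (2 : ℚ) ^ (m - (stack C u k).rank) ↔
      (∑ j ∈ u, rowAt m (C j) (k j)) ∈
        Submodule.span (ZMod 2) (Set.range (fun p => stack C u k p)) :=
  statement_general m s hm C u k hk

end
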